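/- Let X₀, X ∈ L(Δ) with X₀ ⊄ X, and let ε be a p-tuple of elements of Δ with V(ε) = X. Then (∏Δ)^p · (∏ε)^{-1} lies in S and belongs to the ideal power I(X₀)^{p·|Δ_{X₀}| − p + 1}, where ∏Δ = ∏_{α∈Δ} α, I(X₀) ⊆ S is the ideal of polynomials vanishing on X₀, and Δ_{X₀} = Δ ∩ I(X₀). -/

import Mathlib

open MvPolynomial
open scoped Classical

noncomputable section
set_option linter.unusedSectionVars false
set_option maxHeartbeats 1000000
set_option synthInstance.maxHeartbeats 400000

variable {K : Type*} [Field K] [CharZero K] {ℓ : ℕ}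

local notation "S" => MvPolynomial (Fin ℓ) K
local notation "F" => FractionRing (MvPolynomial (Fin ℓ) K)

/-- The reciprocal `1/(α₁ ⋯ α_p) ∈ F` of the product of a tuple (list) of polynomials. -/
def recip (l : List (MvPolynomial (Fin ℓ) K)) : F :=
  (algebraMap S F l.prod)⁻¹

/-- The entries of the tuple `l` all belong to `Δ`. -/
def memTuple (Δ : Set (MvPolynomial (Fin ℓ) K)) (l : List (MvPolynomial (Fin ℓ) K)) : Prop :=
  ∀ α ∈ l, α ∈ Δ

/-- The entries of the tuple `l` are linearly independent over `K`. -/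
def indepTuple (l : List (MvPolynomial (Fin ℓ) K)) : Prop :=
  LinearIndependent K (fun j : Fin l.length => l.get j)

/-- The kernel in `V = K^ℓ` of a linear form (a homogeneous polynomial of degree one),
as a linear subspace. -/
def kerForm (α : MvPolynomial (Fin ℓ) K) : Submodule K (Fin ℓ → K) :=
  LinearMap.ker (∑ i : Fin ℓ,
    MvPolynomial.coeff (Finsupp.single i 1) α • (LinearMap.proj i : (Fin ℓ → K) →ₗ[K] K))

/-- `V(ε) = ⋂_{α ∈ ε} ker α` (equal to all of `V` for the empty tuple). -/
def Vof (l : List (MvPolynomial (Fin ℓ) K)) : Submodule K (Fin ℓ → K) :=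
  ⨅ α ∈ l, kerForm α

/-- The intersection lattice `L(Δ)`. -/
def LOf (Δ : Set (MvPolynomial (Fin ℓ) K)) : Set (Submodule K (Fin ℓ → K)) :=
  {X | ∃ l, memTuple Δ l ∧ X = Vof l}

/-- `I(X)` : the ideal of polynomials vanishing identically on the subspace `X ⊆ V`. -/
def idealOf (X : Submodule K (Fin ℓ → K)) : Ideal (MvPolynomial (Fin ℓ) K) where
  carrier := {p | ∀ v ∈ X, MvPolynomial.eval v p = 0}
  add_mem' := by intro p q hp hq v hv; simp [hp v hv, hq v hv]
  zero_mem' := by intro v hv; simp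
  smul_mem' := by intro c p hp v hv; simp [smul_eq_mul, hp v hv]


omit [CharZero K] in
lemma degree_one_single' {σ : Type*} (d : σ →₀ ℕ) (h : Finsupp.degree d = 1) :
    ∃ i, d = Finsupp.single i 1 := by
  classical
  have hne : d ≠ 0 := by
    intro h0; rw [h0, map_zero] at h; simp at h
  obtain ⟨i, hi⟩ := Finsupp.ne_iff.mp hne
  simp only [Finsupp.coe_zero, Pi.zero_apply] at hi
  have hisupp : i ∈ d.support := Finsupp.mem_support_iff.mpr hi
  refine ⟨i, ?_⟩
  have hsum : ∑ j ∈ d.support, d j = 1 := h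
  have hle : d i ≤ 1 := hsum ▸
    Finset.single_le_sum (f := fun j => d j) (fun _ _ => Nat.zero_le _) hisupp
  have hdi : d i = 1 := le_antisymm hle (Nat.one_le_iff_ne_zero.mpr hi)
  ext j
  by_cases hji : j = i
  · subst hji; simp [hdi]
  · rw [Finsupp.single_apply, if_neg (Ne.symm hji)]
    by_contra hj
    have hjsupp : j ∈ d.support := Finsupp.mem_support_iff.mpr hj
    have hij : d i + d j ≤ ∑ k ∈ d.support, d k := by
      rw [← Finset.sum_pair (Ne.symm hji)]
      refine Finset.sum_le_sum_of_subset ?_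
      intro k hk
      rcases Finset.mem_insert.mp hk with h' | h'
      · exact h' ▸ hisupp
      · exact (Finset.mem_singleton.mp h') ▸ hjsupp
    rw [hsum] at hij
    omega

omit [CharZero K] in
lemma homog_one_eq_sum' (α : MvPolynomial (Fin ℓ) K) (h : α.IsHomogeneous 1) :
    α = ∑ i : Fin ℓ, MvPolynomial.C (coeff (Finsupp.single i 1) α) * MvPolynomial.X i := by
  apply MvPolynomial.ext
  intro d
  rw [MvPolynomial.coeff_sum]
  simp only [coeff_C_mul, coeff_X', mul_ite, mul_one, mul_zero]
  by_cases hd : Finsupp.degree d = 1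
  · obtain ⟨j, rfl⟩ := degree_one_single' d hd
    rw [Finset.sum_congr rfl (g := fun i => if i = j then coeff (Finsupp.single j 1) α else 0)
      (by intro i _
          by_cases hij : i = j
          · subst hij; simp
          · show (if (Finsupp.single i 1) = Finsupp.single j 1
                then coeff (Finsupp.single i 1) α else 0)
                = if i = j then coeff (Finsupp.single j 1) α else 0
            rw [if_neg hij, if_neg]
            intro hc
            exact hij (Finsupp.single_left_injective one_ne_zero hc))]
    simp
  · rw [MvPolynomial.IsHomogeneous.coeff_eq_zero h hd]
    refine (Finset.sum_eq_zero ?_).symm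
    intro i _
    rw [if_neg]
    intro hc
    apply hd
    rw [← hc, Finsupp.degree_single]

omit [CharZero K] in
lemma eval_homog_one' (α : MvPolynomial (Fin ℓ) K) (h : α.IsHomogeneous 1) (v : Fin ℓ → K) :
    eval v α = ∑ i : Fin ℓ, coeff (Finsupp.single i 1) α * v i := by
  conv_lhs => rw [homog_one_eq_sum' α h]
  simp

lemma prod_finset_mem_pow' {R : Type*} [CommRing R] (I : Ideal R) (s : Finset R)
    (h : ∀ x ∈ s, x ∈ I) : (∏ x ∈ s, x) ∈ I ^ s.card := by
  classical
  induction s using Finset.cons_induction with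
  | empty => simp
  | cons a s ha ih =>
    rw [Finset.prod_cons, Finset.card_cons, pow_succ']
    exact Ideal.mul_mem_mul (h a (Finset.mem_cons_self a s))
      (ih fun x hx => h x (Finset.mem_cons_of_mem hx))

lemma list_prod_mem_pow' {R : Type*} [CommRing R] (I : Ideal R) (k : ℕ) (l : List R)
    (h : ∀ a ∈ l, a ∈ I ^ k) : l.prod ∈ I ^ (k * l.length) := by
  induction l with
  | nil => simp
  | cons a t ih =>
    rw [List.prod_cons, List.length_cons, show k * (t.length + 1) = k + k * t.length by ring,
      pow_add]
    exact Ideal.mul_mem_mul (h a List.mem_cons_self)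
      (ih fun x hx => h x (List.mem_cons_of_mem a hx))


/-- **Key lemma in the proof of Proposition 2.1.** If `X₀ ⊄ X = V(ε)`, then
`(∏Δ)^p (∏ε)⁻¹` is a polynomial lying in `I(X₀)^{p|Δ_{X₀}| - p + 1}`. -/
theorem prod_pow_mul_recip_mem_ideal_pow
    (Δ : Finset (MvPolynomial (Fin ℓ) K))
    (hne : ∀ α ∈ Δ, α ≠ 0)
    (hhom : ∀ α ∈ Δ, MvPolynomial.IsHomogeneous α 1)
    (hprop : ∀ α ∈ Δ, ∀ β ∈ Δ, α ≠ β → ∀ c : K, β ≠ c • α)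
    (X₀ Xv : Submodule K (Fin ℓ → K))
    (hX₀ : X₀ ∈ LOf (↑Δ : Set (MvPolynomial (Fin ℓ) K)))
    (hXv : Xv ∈ LOf (↑Δ : Set (MvPolynomial (Fin ℓ) K)))
    (hnsub : ¬ X₀ ≤ Xv)
    (l : List (MvPolynomial (Fin ℓ) K))
    (hl : memTuple (↑Δ : Set (MvPolynomial (Fin ℓ) K)) l)
    (hVl : Vof l = Xv) :
    ∃ q : MvPolynomial (Fin ℓ) K,
      q ∈ (idealOf X₀) ^
          (l.length * ((↑Δ : Set (MvPolynomial (Fin ℓ) K)) ∩ (idealOf X₀ : Set _)).ncard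
            + 1 - l.length) ∧
        algebraMap (MvPolynomial (Fin ℓ) K) F q =
          (algebraMap (MvPolynomial (Fin ℓ) K) F (∏ α ∈ Δ, α)) ^ l.length * recip l := by
  classical
  have hmcard : ((↑Δ : Set (MvPolynomial (Fin ℓ) K)) ∩ ((idealOf X₀ : Ideal _) : Set _)).ncard
      = (Δ.filter (fun β => β ∈ idealOf X₀)).card := by
    rw [← Set.ncard_coe_finset]
    congr 1
    ext β
    simp [Set.mem_inter_iff]
  have hlΔ : ∀ a ∈ l, a ∈ Δ := fun a ha => Finset.mem_coe.mp (hl a ha)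
  -- find the entry α₀ whose kernel does not contain X₀
  rw [← hVl] at hnsub
  have hex : ∃ α ∈ l, ¬ X₀ ≤ kerForm α := by
    by_contra hall
    push_neg at hall
    exact hnsub (le_iInf fun α => le_iInf fun hα => hall α hα)
  obtain ⟨α₀, hα₀l, hα₀⟩ := hex
  have hα₀Δ : α₀ ∈ Δ := hlΔ α₀ hα₀l
  have hα₀I : α₀ ∉ idealOf X₀ := by
    intro hmem
    apply hα₀
    intro v hv
    have hev : MvPolynomial.eval v α₀ = 0 := hmem v hv
    rw [eval_homog_one' α₀ (hhom _ hα₀Δ) v] at hev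
    simp only [kerForm, LinearMap.mem_ker, LinearMap.coe_sum, Finset.sum_apply,
      LinearMap.smul_apply, LinearMap.proj_apply, smul_eq_mul]
    exact hev
  -- the cofactor polynomials
  set g : MvPolynomial (Fin ℓ) K → MvPolynomial (Fin ℓ) K :=
    fun α => ∏ β ∈ Δ.erase α, β with hgdef
  have hprod : ∀ t : List (MvPolynomial (Fin ℓ) K), (∀ a ∈ t, a ∈ Δ) →
      ((t.map g).prod) * t.prod = (∏ β ∈ Δ, β) ^ t.length := by
    intro t
    induction t with
    | nil => intro _; simp
    | cons a s ih =>
      intro ht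
      rw [List.map_cons, List.prod_cons, List.prod_cons, List.length_cons, pow_succ']
      have h1 := ih fun x hx => ht x (List.mem_cons_of_mem a hx)
      have h2 : g a * a = ∏ β ∈ Δ, β :=
        Finset.prod_erase_mul Δ _ (ht a List.mem_cons_self)
      calc g a * (s.map g).prod * (a * s.prod)
          = (g a * a) * ((s.map g).prod * s.prod) := by ring
        _ = (∏ β ∈ Δ, β) * (∏ β ∈ Δ, β) ^ s.length := by rw [h1, h2]
  set D₀ := Δ.filter (fun β => β ∈ idealOf X₀) with hD₀def
  have hgI : ∀ α ∈ Δ, g α ∈ (idealOf X₀) ^ (D₀.erase α).card := by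
    intro α hα
    have hsub : D₀.erase α ⊆ Δ.erase α :=
      Finset.erase_subset_erase _ (Finset.filter_subset _ _)
    rw [show g α = (∏ β ∈ (Δ.erase α) \ (D₀.erase α), β) * ∏ β ∈ D₀.erase α, β from
      (Finset.prod_sdiff hsub).symm]
    exact Ideal.mul_mem_left _ _ (prod_finset_mem_pow' _ _
      (fun x hx => (Finset.mem_filter.mp (Finset.mem_of_mem_erase hx)).2))
  have hgI' : ∀ α ∈ Δ, g α ∈ (idealOf X₀) ^ (D₀.card - 1) := by
    intro α hα
    refine Ideal.pow_le_pow_right ?_ (hgI α hα)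
    by_cases hαD : α ∈ D₀
    · rw [Finset.card_erase_of_mem hαD]
    · rw [Finset.erase_eq_of_notMem hαD]
      omega
  have hgα₀ : g α₀ ∈ (idealOf X₀) ^ D₀.card := by
    have hnotD : α₀ ∉ D₀ := fun hc => hα₀I (Finset.mem_filter.mp hc).2
    have h0 := hgI α₀ hα₀Δ
    rwa [Finset.erase_eq_of_notMem hnotD] at h0
  -- split the list at an occurrence of α₀
  obtain ⟨l₁, l₂, rfl⟩ := List.append_of_mem hα₀l
  refine ⟨((l₁ ++ α₀ :: l₂).map g).prod, ?_, ?_⟩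
  · have h1 : (l₁.map g).prod ∈ (idealOf X₀) ^ ((D₀.card - 1) * l₁.length) := by
      have := list_prod_mem_pow' (idealOf X₀) (D₀.card - 1) (l₁.map g)
        (fun a ha => by
          obtain ⟨x, hx, rfl⟩ := List.mem_map.mp ha
          exact hgI' x (hlΔ x (by simp [hx])))
      rwa [List.length_map] at this
    have h2 : (l₂.map g).prod ∈ (idealOf X₀) ^ ((D₀.card - 1) * l₂.length) := by
      have := list_prod_mem_pow' (idealOf X₀) (D₀.card - 1) (l₂.map g)
        (fun a ha => by
          obtain ⟨x, hx, rfl⟩ := List.mem_map.mp ha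
          exact hgI' x (hlΔ x (by simp [hx])))
      rwa [List.length_map] at this
    have hq : ((l₁ ++ α₀ :: l₂).map g).prod = (l₁.map g).prod * (g α₀ * (l₂.map g).prod) := by
      simp [List.map_append, List.prod_append, List.prod_cons]
    rw [hq, hmcard]
    have htot : (l₁.map g).prod * (g α₀ * (l₂.map g).prod) ∈
        (idealOf X₀) ^ ((D₀.card - 1) * l₁.length + (D₀.card + (D₀.card - 1) * l₂.length)) := by
      rw [pow_add, pow_add]
      exact Ideal.mul_mem_mul h1 (Ideal.mul_mem_mul hgα₀ h2)
    refine Ideal.pow_le_pow_right ?_ htot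
    have hL : (l₁ ++ α₀ :: l₂).length = l₁.length + (l₂.length + 1) := by
      simp [List.length_append]
    rw [hL]
    set p₁ := l₁.length
    set p₂ := l₂.length
    cases hm : D₀.card with
    | zero => simp; omega
    | succ m' =>
      simp only [Nat.add_sub_cancel]
      have e1 : (p₁ + (p₂ + 1)) * (m' + 1) = (p₁ + (p₂ + 1)) * m' + (p₁ + (p₂ + 1)) := by ring
      have e2 : (p₁ + (p₂ + 1)) * m' = m' * p₁ + m' * p₂ + m' := by ring
      omega
  · have hid := hprod (l₁ ++ α₀ :: l₂) hlΔ
    have hl0 : (l₁ ++ α₀ :: l₂).prod ≠ 0 :=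
      List.prod_ne_zero (fun h0 => hne 0 (hlΔ 0 h0) rfl)
    have halg : algebraMap (MvPolynomial (Fin ℓ) K) F ((l₁ ++ α₀ :: l₂).prod) ≠ 0 := by
      rw [map_ne_zero_iff _ (IsFractionRing.injective (MvPolynomial (Fin ℓ) K) F)]
      exact hl0
    show _ = _ * (algebraMap (MvPolynomial (Fin ℓ) K) F ((l₁ ++ α₀ :: l₂).prod))⁻¹
    rw [eq_mul_inv_iff_mul_eq₀ halg, ← map_mul, hid, map_pow]


end
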